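/- Let 0 < A < B and Y > 0, and let z be a nonzero complex number. Then ∫_{−π}^{π} ∫_A^B min(‖Im(z R e^{iθ})‖_ℝ^{−1}, Y)^{1/2} · min(‖Re(z R e^{iθ})‖_ℝ^{−1}, Y)^{1/2} dR dθ ≪_{A,B} max(1, |z|^{−1}) · log(2 + Y). -/

import Mathlib

open Real Complex MeasureTheory intervalIntegral

/-- Distance from a real number to the nearest integer. -/
noncomputable def distNearestInt (x : ℝ) : ℝ := ⨅ m : ℤ, |x - (m : ℝ)|

/-- `min(‖y‖_ℝ^{-1}, Y)`, with the convention that the value is `Y` when `‖y‖_ℝ = 0`. -/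
noncomputable def minInvDist (y Y : ℝ) : ℝ :=
  if distNearestInt y = 0 then Y else min (distNearestInt y)⁻¹ Y

/-!
Write `u(x) = √(min(‖x‖⁻¹, Y))` and `g(w) = u(Im w) u(Re w)`. Writing `z = |z| e^{iα}`, the shift
`θ ↦ θ + α` and the substitution `s = |z| R` turn the left side into `|z|⁻¹` times the
polar-coordinate form of `∫ g(w) / |w|` over the annulus `|z| A < |w| ≤ |z| B`. Bounding `1 / |w|`
by `(|z| A)⁻¹` and enlarging the annulus to the square `[-c, c]²`, `c = |z| B`, the integral
splits as `(∫_{-c}^{c} u)²`. As `u` is even, `1`-periodic and at most `|x|^{-1/2}` near `0`,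
`∫_{-c}^{c} u ≪ √c + c`, whence the bound `≪ (B + B²) / A · max(1, |z|⁻¹)`, uniformly in `Y`.
-/

open Set Function

lemma distNearestInt_eq_norm (x : ℝ) : distNearestInt x = ‖(x : UnitAddCircle)‖ := by
  rw [UnitAddCircle.norm_eq]
  exact le_antisymm (ciInf_le ⟨0, by rintro _ ⟨m, rfl⟩; positivity⟩ (round x))
    (le_ciInf fun m => round_le x m)

lemma continuous_distNearestInt : Continuous distNearestInt := by
  rw [funext distNearestInt_eq_norm]
  exact continuous_norm.comp (AddCircle.continuous_mk' (1 : ℝ))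

lemma distNearestInt_nonneg (x : ℝ) : 0 ≤ distNearestInt x := by
  rw [distNearestInt_eq_norm]
  positivity

lemma distNearestInt_neg (x : ℝ) : distNearestInt (-x) = distNearestInt x := by
  simp only [distNearestInt_eq_norm, AddCircle.coe_neg, norm_neg]

lemma distNearestInt_periodic : Periodic distNearestInt 1 := fun x => by
  simp only [distNearestInt_eq_norm, AddCircle.coe_add_period]

lemma distNearestInt_of_abs_le_half {x : ℝ} (hx : |x| ≤ 1 / 2) : distNearestInt x = |x| := by
  rw [distNearestInt_eq_norm, AddCircle.norm_coe_eq_abs_iff (p := 1) one_ne_zero]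
  simpa using hx

/-- The form in which the convention at `distNearestInt y = 0` is seen to make `minInvDist · Y`
continuous. -/
lemma minInvDist_eq_div_max (y Y : ℝ) : minInvDist y Y = Y / max 1 (Y * distNearestInt y) := by
  unfold minInvDist
  split_ifs with h
  · simp [h]
  have hd : 0 < distNearestInt y := (distNearestInt_nonneg y).lt_of_ne' h
  rcases le_total (Y * distNearestInt y) 1 with hY | hY
  · rw [max_eq_left hY, div_one, min_eq_right (by rwa [← one_div, le_div_iff₀ hd])]
  · rw [max_eq_right hY, min_eq_left (by rw [← one_div, div_le_iff₀ hd]; linarith),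
      div_mul_cancel_left₀ (by rintro rfl; linarith)]

lemma continuous_minInvDist (Y : ℝ) : Continuous fun y => minInvDist y Y := by
  simp only [minInvDist_eq_div_max]
  exact continuous_const.div (continuous_const.max (continuous_const.mul continuous_distNearestInt))
    fun y => (zero_lt_one.trans_le (le_max_left _ _)).ne'

lemma minInvDist_neg (y Y : ℝ) : minInvDist (-y) Y = minInvDist y Y := by
  simp only [minInvDist, distNearestInt_neg]

lemma minInvDist_periodic (Y : ℝ) : Periodic (fun y => minInvDist y Y) 1 := fun y => by
  simp only [minInvDist, distNearestInt_periodic y]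

lemma sqrt_minInvDist_le_rpow (Y : ℝ) {y : ℝ} (hy : y ∈ Ioc (0 : ℝ) (1 / 2)) :
    √(minInvDist y Y) ≤ y ^ (-(1 / 2) : ℝ) := by
  have hd : distNearestInt y = y := by
    rw [distNearestInt_of_abs_le_half (by rw [abs_of_pos hy.1]; exact hy.2), abs_of_pos hy.1]
  have hle : minInvDist y Y ≤ y⁻¹ := by
    rw [minInvDist, hd, if_neg hy.1.ne']
    exact min_le_left _ _
  calc √(minInvDist y Y) ≤ √y⁻¹ := sqrt_le_sqrt hle
    _ = y ^ (-(1 / 2) : ℝ) := by rw [sqrt_inv, sqrt_eq_rpow, rpow_neg hy.1.le]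

section EvenPeriodic

variable {f : ℝ → ℝ}

lemma integral_neg_self_eq_two_mul_of_even (hf : ∀ a b, IntervalIntegrable f volume a b)
    (heven : ∀ x, f (-x) = f x) (c : ℝ) :
    ∫ x in -c..c, f x = 2 * ∫ x in 0..c, f x := by
  have hleft : ∫ x in -c..0, f x = ∫ x in 0..c, f x := by
    simpa only [heven, neg_zero] using (integral_comp_neg (a := 0) (b := c) f).symm
  rw [← integral_add_adjacent_intervals (hf (-c) 0) (hf 0 c), hleft, two_mul]

lemma integral_zero_le_two_mul_sqrt (hf : ∀ a b, IntervalIntegrable f volume a b)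
    (hsing : ∀ x ∈ Ioc (0 : ℝ) (1 / 2), f x ≤ x ^ (-(1 / 2) : ℝ))
    {c : ℝ} (hc₀ : 0 ≤ c) (hc : c ≤ 1 / 2) :
    ∫ x in 0..c, f x ≤ 2 * √c := by
  calc ∫ x in 0..c, f x ≤ ∫ x in 0..c, x ^ (-(1 / 2) : ℝ) :=
        integral_mono_on_of_le_Ioo hc₀ (hf 0 c) (intervalIntegrable_rpow' (by norm_num))
          fun x hx => hsing x ⟨hx.1, hx.2.le.trans hc⟩
    _ = 2 * √c := by
        rw [integral_rpow (Or.inl (by norm_num)), sqrt_eq_rpow]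
        norm_num
        ring

variable (hf : ∀ a b, IntervalIntegrable f volume a b) (heven : ∀ x, f (-x) = f x)
  (hper : Periodic f 1) (hsing : ∀ x ∈ Ioc (0 : ℝ) (1 / 2), f x ≤ x ^ (-(1 / 2) : ℝ))
include hf heven hper hsing

lemma integral_add_one_le_three (t : ℝ) : ∫ x in t..t + 1, f x ≤ 3 := by
  have hshift : ∫ x in t..t + 1, f x = ∫ x in -(1 / 2)..1 / 2, f x := by
    rw [hper.intervalIntegral_add_eq t (-(1 / 2))]
    norm_num
  have hsqrt : √(1 / 2 : ℝ) ≤ 3 / 4 := by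
    rw [sqrt_le_left (by norm_num)]
    norm_num
  rw [hshift, integral_neg_self_eq_two_mul_of_even hf heven]
  linarith [integral_zero_le_two_mul_sqrt hf hsing (c := 1 / 2) (by norm_num) le_rfl]

lemma integral_neg_self_le (hf₀ : ∀ x, 0 ≤ f x) {c : ℝ} (hc : 0 ≤ c) :
    ∫ x in -c..c, f x ≤ 18 * (√c + c) := by
  rcases le_or_gt c (1 / 2) with hsmall | hlarge
  · rw [integral_neg_self_eq_two_mul_of_even hf heven]
    linarith [integral_zero_le_two_mul_sqrt hf hsing hc hsmall, sqrt_nonneg c]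
  obtain ⟨n, hcn, hnc⟩ : ∃ n : ℕ, c ≤ n ∧ (n : ℝ) < c + 1 :=
    ⟨⌈c⌉₊, Nat.le_ceil c, Nat.ceil_lt_add_one hc⟩
  have hperiods : ∫ x in -(n : ℝ)..n, f x = (2 * n : ℤ) • ∫ x in -(n : ℝ)..-n + 1, f x := by
    rw [← hper.intervalIntegral_add_zsmul_eq _ _ hf]
    congr 1
    simp only [zsmul_eq_mul, mul_one, Int.cast_mul, Int.cast_ofNat, Int.cast_natCast]
    ring
  calc ∫ x in -c..c, f x ≤ ∫ x in -(n : ℝ)..n, f x :=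
        integral_mono_interval (by linarith) (by linarith) hcn (ae_of_all _ hf₀) (hf _ _)
    _ ≤ 2 * n * 3 := by
        rw [hperiods, zsmul_eq_mul]
        push_cast
        gcongr
        exact integral_add_one_le_three hf heven hper hsing _
    _ ≤ 18 * (√c + c) := by nlinarith [sqrt_nonneg c]

end EvenPeriodic

lemma integral_sqrt_minInvDist_le (Y : ℝ) {c : ℝ} (hc : 0 ≤ c) :
    ∫ x in -c..c, √(minInvDist x Y) ≤ 18 * (√c + c) :=
  integral_neg_self_le (fun _ _ => ((continuous_minInvDist Y).sqrt).intervalIntegrable _ _)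
    (fun x => by rw [minInvDist_neg]) (fun x => by simp only [minInvDist_periodic Y x])
    (fun _ => sqrt_minInvDist_le_rpow Y) (fun _ => sqrt_nonneg _) hc

section Polar

variable {E : Type*} [NormedAddCommGroup E] [NormedSpace ℝ E]

lemma integral_integral_mul_exp_rotate (f : ℂ → E) {z : ℂ} (hz : z ≠ 0) (a b : ℝ) :
    ∫ θ in -π..π, ∫ R in a..b, f (z * R * exp (θ * I)) =
      ‖z‖⁻¹ • ∫ θ in -π..π, ∫ s in ‖z‖ * a..‖z‖ * b, f (s * exp (θ * I)) := by
  set F : ℝ → E := fun θ => ∫ s in ‖z‖ * a..‖z‖ * b, f (s * exp (θ * I))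
  have hF : Periodic F (2 * π) := fun θ => by
    simp only [F, ofReal_add, ofReal_mul, ofReal_ofNat, exp_mul_I_periodic θ]
  have hinner : ∀ θ : ℝ, ∫ R in a..b, f (z * R * exp (θ * I)) = ‖z‖⁻¹ • F (θ + arg z) := by
    intro θ
    rw [show F (θ + arg z) = _ from (smul_integral_comp_mul_left _ ‖z‖).symm, smul_smul,
      inv_mul_cancel₀ (norm_ne_zero_iff.mpr hz), one_smul]
    congr 1 with R
    conv_lhs => rw [← norm_mul_exp_arg_mul_I z]
    push_cast
    rw [add_mul, Complex.exp_add]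
    ring_nf
  simp_rw [hinner, intervalIntegral.integral_smul, integral_comp_add_right F (arg z)]
  congr 1
  convert hF.intervalIntegral_add_eq (-π + arg z) (-π) using 2 <;> ring

lemma polarCoord_symm_eq_mul_exp (p : ℝ × ℝ) :
    Complex.polarCoord.symm p = p.1 * exp (p.2 * I) := by
  rw [Complex.polarCoord_symm_apply, exp_mul_I, ← ofReal_cos, ← ofReal_sin]

lemma integral_integral_mul_exp_eq_setIntegral {f : ℂ → E} (hf : Continuous f) {a b : ℝ}
    (ha : 0 < a) (hab : a ≤ b) :
    ∫ θ in -π..π, ∫ s in a..b, f (s * exp (θ * I)) = ∫ w in norm ⁻¹' Ioc a b, ‖w‖⁻¹ • f w := by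
  have hint : IntegrableOn (fun q : ℝ × ℝ => f (q.2 * exp (q.1 * I))) (Ioo (-π) π ×ˢ Ioc a b) :=
    ((by fun_prop : Continuous fun q : ℝ × ℝ => f (q.2 * exp (q.1 * I))).continuousOn
      |>.integrableOn_compact (isCompact_Icc.prod isCompact_Icc)).mono_set
      (prod_mono Ioo_subset_Icc_self Ioc_subset_Icc_self)
  have htarget : Ioc a b ×ˢ Ioo (-π) π = polarCoord.target ∩ Ioc a b ×ˢ univ := by
    ext ⟨r, θ⟩
    simp only [polarCoord_target, mem_inter_iff, mem_prod, mem_Ioi, mem_Ioc, mem_Ioo, mem_univ]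
    grind
  calc ∫ θ in -π..π, ∫ s in a..b, f (s * exp (θ * I))
      = ∫ θ in Ioo (-π) π, ∫ s in Ioc a b, f (s * exp (θ * I)) := by
        simp only [integral_of_le hab, integral_of_le (neg_le_self pi_pos.le)]
        exact integral_Ioc_eq_integral_Ioo
    _ = ∫ p in Ioc a b ×ˢ Ioo (-π) π, f (p.1 * exp (p.2 * I)) := by
        rw [Measure.volume_eq_prod, ← setIntegral_prod_swap, setIntegral_prod]
        exacts [rfl, hint]
    _ = ∫ p in polarCoord.target,
          p.1 • (norm ⁻¹' Ioc a b).indicator (fun w => ‖w‖⁻¹ • f w)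
            (Complex.polarCoord.symm p) := by
        rw [htarget, ← setIntegral_indicator (measurableSet_Ioc.prod MeasurableSet.univ)]
        apply setIntegral_congr_fun polarCoord.open_target.measurableSet
        rintro ⟨r, θ⟩ ⟨hr, -⟩
        simp only [polarCoord_symm_eq_mul_exp, mem_Ioi] at hr ⊢
        have hnorm : ‖(r : ℂ) * exp (θ * I)‖ = r := by
          rw [norm_mul, norm_exp_ofReal_mul_I, mul_one, norm_real, norm_of_nonneg hr.le]
        have hmem : (r : ℂ) * exp (θ * I) ∈ norm ⁻¹' Ioc a b ↔ (r, θ) ∈ Ioc a b ×ˢ univ := by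
          simp only [mem_preimage, hnorm, mem_prod, mem_univ, and_true]
        by_cases hrab : (r, θ) ∈ Ioc a b ×ˢ univ
        · rw [indicator_of_mem hrab, indicator_of_mem (hmem.2 hrab), hnorm, smul_smul,
            mul_inv_cancel₀ hr.ne', one_smul]
        · rw [indicator_of_notMem hrab, indicator_of_notMem (mt hmem.1 hrab), smul_zero]
    _ = ∫ w in norm ⁻¹' Ioc a b, ‖w‖⁻¹ • f w := by
        rw [Complex.integral_comp_polarCoord_symm, MeasureTheory.integral_indicator
          (measurableSet_Ioc.preimage continuous_norm.measurable)]

end Polar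

lemma setIntegral_Ioc_norm_inv_mul_le {f : ℂ → ℝ} (hf : Continuous f) (hf₀ : ∀ w, 0 ≤ f w)
    {a : ℝ} (ha : 0 < a) (b : ℝ) :
    ∫ w in norm ⁻¹' Ioc a b, ‖w‖⁻¹ * f w ≤ a⁻¹ * ∫ w in Metric.closedBall 0 b, f w := by
  have hmeas : MeasurableSet (norm ⁻¹' Ioc a b : Set ℂ) :=
    measurableSet_Ioc.preimage continuous_norm.measurable
  have hsub : norm ⁻¹' Ioc a b ⊆ Metric.closedBall (0 : ℂ) b := fun w hw => by
    simpa using hw.2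
  have hball : IntegrableOn f (Metric.closedBall 0 b) :=
    hf.continuousOn.integrableOn_compact (isCompact_closedBall 0 b)
  have hle : ∀ w ∈ norm ⁻¹' Ioc a b, ‖w‖⁻¹ * f w ≤ a⁻¹ * f w := fun w hw =>
    mul_le_mul_of_nonneg_right (inv_anti₀ ha hw.1.le) (hf₀ w)
  have hint : IntegrableOn (fun w => ‖w‖⁻¹ * f w) (norm ⁻¹' Ioc a b) := by
    refine Integrable.mono' ((hball.mono_set hsub).const_mul a⁻¹)
      (continuous_norm.measurable.inv.mul hf.measurable).aestronglyMeasurable ?_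
    filter_upwards [ae_restrict_mem hmeas] with w hw
    rw [norm_of_nonneg (by have := hf₀ w; positivity)]
    exact hle w hw
  calc ∫ w in norm ⁻¹' Ioc a b, ‖w‖⁻¹ * f w ≤ ∫ w in norm ⁻¹' Ioc a b, a⁻¹ * f w :=
        setIntegral_mono_on hint ((hball.mono_set hsub).const_mul a⁻¹) hmeas hle
    _ = a⁻¹ * ∫ w in norm ⁻¹' Ioc a b, f w := integral_const_mul _ _
    _ ≤ a⁻¹ * ∫ w in Metric.closedBall 0 b, f w := mul_le_mul_of_nonneg_left
        (setIntegral_mono_set hball (ae_of_all _ hf₀) hsub.eventuallyLE) (inv_nonneg.2 ha.le)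

lemma setIntegral_closedBall_re_mul_im_le {u v : ℝ → ℝ} (hu : Continuous u) (hv : Continuous v)
    (hu₀ : ∀ x, 0 ≤ u x) (hv₀ : ∀ y, 0 ≤ v y) {b : ℝ} (hb : 0 ≤ b) :
    ∫ w in Metric.closedBall (0 : ℂ) b, u w.re * v w.im ≤
      (∫ x in -b..b, u x) * ∫ y in -b..b, v y := by
  have hsub : Metric.closedBall (0 : ℂ) b ⊆ Icc (-b) b ×ℂ Icc (-b) b := fun w hw => by
    rw [mem_closedBall_zero_iff] at hw
    exact ⟨abs_le.1 ((abs_re_le_norm w).trans hw), abs_le.1 ((abs_im_le_norm w).trans hw)⟩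
  have hsquare : ∫ w in Icc (-b) b ×ℂ Icc (-b) b, u w.re * v w.im =
      (∫ x in -b..b, u x) * ∫ y in -b..b, v y := by
    rw [integral_of_le (neg_le_self hb), integral_of_le (neg_le_self hb),
      ← integral_Icc_eq_integral_Ioc, ← integral_Icc_eq_integral_Ioc, ← setIntegral_prod_mul,
      ← Measure.volume_eq_prod, ← volume_preserving_equiv_real_prod.setIntegral_preimage_emb
        measurableEquivRealProd.measurableEmbedding]
    rfl
  calc ∫ w in Metric.closedBall (0 : ℂ) b, u w.re * v w.im
      ≤ ∫ w in Icc (-b) b ×ℂ Icc (-b) b, u w.re * v w.im :=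
        setIntegral_mono_set
          ((by fun_prop : Continuous fun w : ℂ => u w.re * v w.im).continuousOn
            |>.integrableOn_compact (isCompact_Icc.reProdIm isCompact_Icc))
          (ae_of_all _ fun w => mul_nonneg (hu₀ _) (hv₀ _)) hsub.eventuallyLE
    _ = _ := hsquare

theorem integral_integral_sqrt_minInvDist_le {A B : ℝ} (hA : 0 < A) (hAB : A ≤ B) (Y : ℝ)
    {z : ℂ} (hz : z ≠ 0) :
    ∫ θ in (-π)..π, ∫ R in A..B,
        √(minInvDist (z * R * exp (θ * I)).im Y) * √(minInvDist (z * R * exp (θ * I)).re Y) ≤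
      648 * (B + B ^ 2) / A * max 1 ‖z‖⁻¹ := by
  set u : ℝ → ℝ := fun x => √(minInvDist x Y)
  have hu : Continuous u := (continuous_minInvDist Y).sqrt
  set g : ℂ → ℝ := fun w => u w.im * u w.re
  have hg : Continuous g := by fun_prop
  set r := ‖z‖
  have hr : 0 < r := norm_pos_iff.2 hz
  have hrB : 0 ≤ r * B := by nlinarith
  calc ∫ θ in (-π)..π, ∫ R in A..B, g (z * R * exp (θ * I))
      = r⁻¹ * ∫ θ in -π..π, ∫ s in r * A..r * B, g (s * exp (θ * I)) :=
        integral_integral_mul_exp_rotate g hz A B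
    _ = r⁻¹ * ∫ w in norm ⁻¹' Ioc (r * A) (r * B), ‖w‖⁻¹ * g w := by
        rw [integral_integral_mul_exp_eq_setIntegral hg (by positivity) (by gcongr)]
        rfl
    _ ≤ r⁻¹ * ((r * A)⁻¹ * ∫ w in Metric.closedBall 0 (r * B), g w) := by
        gcongr
        exact setIntegral_Ioc_norm_inv_mul_le hg (fun w => by positivity) (by positivity) _
    _ ≤ r⁻¹ * ((r * A)⁻¹ * (∫ x in -(r * B)..r * B, u x) ^ 2) := by
        gcongr
        simpa only [g, mul_comm (u (im _)), sq] using setIntegral_closedBall_re_mul_im_le hu hu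
          (fun _ => sqrt_nonneg _) (fun _ => sqrt_nonneg _) hrB
    _ ≤ r⁻¹ * ((r * A)⁻¹ * (18 * (√(r * B) + r * B)) ^ 2) := by
        gcongr
        · exact integral_nonneg (by linarith) fun x _ => sqrt_nonneg _
        · exact integral_sqrt_minInvDist_le Y hrB
    _ ≤ r⁻¹ * ((r * A)⁻¹ * (648 * (r * B + (r * B) ^ 2))) := by
        gcongr
        nlinarith [sq_sqrt hrB, sq_nonneg (√(r * B) - r * B)]
    _ = 648 / A * (B * r⁻¹ + B ^ 2) := by
        field_simp
    _ ≤ 648 / A * ((B + B ^ 2) * max 1 r⁻¹) := by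
        gcongr
        nlinarith [le_max_left 1 r⁻¹, le_max_right 1 r⁻¹, sq_nonneg B, hA.le.trans hAB]
    _ = 648 * (B + B ^ 2) / A * max 1 r⁻¹ := by ring

theorem stmt_10 (A B : ℝ) (hA : 0 < A) (hAB : A < B) :
    ∃ C : ℝ, 0 < C ∧ ∀ Y : ℝ, 0 < Y → ∀ z : ℂ, z ≠ 0 →
      ∫ θ in (-π)..π, ∫ R in A..B,
          Real.sqrt (minInvDist (z * (R : ℂ) * Complex.exp (θ * Complex.I)).im Y) *
          Real.sqrt (minInvDist (z * (R : ℂ) * Complex.exp (θ * Complex.I)).re Y) ≤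
        C * max 1 (‖z‖)⁻¹ * Real.log (2 + Y) := by
  have hB : 0 < B := hA.trans hAB
  refine ⟨1296 * (B + B ^ 2) / A, by positivity, fun Y hY z hz => ?_⟩
  have hlog : 1 / 2 ≤ Real.log (2 + Y) := by
    linarith [log_two_gt_d9, log_le_log two_pos (by linarith : (2 : ℝ) ≤ 2 + Y)]
  have hM : 0 ≤ 648 * (B + B ^ 2) / A * max 1 ‖z‖⁻¹ := by positivity
  calc _ ≤ 648 * (B + B ^ 2) / A * max 1 ‖z‖⁻¹ :=
        integral_integral_sqrt_minInvDist_le hA hAB.le Y hz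
    _ ≤ 648 * (B + B ^ 2) / A * max 1 ‖z‖⁻¹ * (2 * Real.log (2 + Y)) :=
        le_mul_of_one_le_right hM (by linarith)
    _ = 1296 * (B + B ^ 2) / A * max 1 ‖z‖⁻¹ * Real.log (2 + Y) := by ring
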